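/- arXiv:1604.01234 — 2 statements merged into one kernel-verified Lean document; each statement's English description precedes it below -/
import Mathlib

section
/- Let a = {a_n} and b = {b_n} be two equivalent positive summable sequences. Then for every E ∈ 𝒞_a, the corresponding complementary set Π(E) ∈ 𝒞_b is bi-Lipschitz equivalent to E (the map π : E → π(E) is bi-Lipschitz), and consequently E and Π(E) have the same Assouad dimension and the same Lower Assouad dimension. -/
open scoped BigOperators
open Set

/-- `coverNum r F` is the minimal number of closed balls of radius `r`
needed to cover `F`. -/
noncomputable def coverNum (r : ℝ) (F : Set ℝ) : ℕ :=
  sInf {n : ℕ | ∃ S : Finset ℝ, S.card = n ∧ F ⊆ ⋃ x ∈ S, Metric.closedBall x r}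

/-- The Assouad dimension of a set `F ⊆ ℝ`. -/
noncomputable def dimA (F : Set ℝ) : ℝ :=
  sInf {α : ℝ | ∃ c > (0 : ℝ), ∃ ρ > (0 : ℝ), ∀ x ∈ F, ∀ r R : ℝ,
    0 < r → r < R → R < ρ →
    (coverNum r (Metric.closedBall x R ∩ F) : ℝ) ≤ c * (R / r) ^ α}

/-- The Lower Assouad dimension of a set `F ⊆ ℝ`. -/
noncomputable def dimL (F : Set ℝ) : ℝ :=
  sSup {α : ℝ | ∃ c > (0 : ℝ), ∃ ρ > (0 : ℝ), ∀ x ∈ F, ∀ r R : ℝ,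
    0 < r → r < R → R < ρ →
    c * (R / r) ^ α ≤ (coverNum r (Metric.closedBall x R ∩ F) : ℝ)}

/-- `E` is a complementary set of the (positive, summable) sequence `a`,
i.e. `E ∈ 𝒞_a`:  `E = [0, L] \ ⋃ U n` where the `U n` are disjoint open
intervals in `[0, L]` with `U n` of length `a n`, and `L = ∑ a`. -/
def IsComplementarySet (a : ℕ → ℝ) (E : Set ℝ) : Prop :=
  ∃ U : ℕ → Set ℝ,
    (∀ n, ∃ p q : ℝ, p < q ∧ q - p = a n ∧ U n = Set.Ioo p q) ∧
    (∀ n, U n ⊆ Set.Icc 0 (∑' i, a i)) ∧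
    Pairwise (Function.onFun Disjoint U) ∧
    E = Set.Icc 0 (∑' i, a i) \ ⋃ n, U n

/-- The decreasing complementary set `D_a = {∑_{i ≥ k} a i : k} ∪ {0}`,
obtained by placing the gaps in order from right to left starting at `L`. -/
noncomputable def decSet (a : ℕ → ℝ) : Set ℝ :=
  {0} ∪ {x : ℝ | ∃ k : ℕ, x = ∑' i : ℕ, a (k + i)}

/-- Length of the `j`-th closed interval (0-indexed, `j < 2 ^ k`) at step `k`
of the construction of the Cantor set associated to the gap sequence `a`:
it is the total length of all the gaps to be removed from that interval. -/
noncomputable def cantorLen (a : ℕ → ℝ) (k j : ℕ) : ℝ :=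
  ∑' m : ℕ, ∑ i ∈ Finset.range (2 ^ m), a (2 ^ (k + m) - 1 + 2 ^ m * j + i)

/-- Left endpoint of the `j`-th closed interval (0-indexed, `j < 2 ^ k`) at
step `k` of the construction of the Cantor set associated to `a`:  removing
from each step-`k` interval `I_j^k` the open gap of length `a (2 ^ k - 1 + j)`
produces the two step-`(k+1)` intervals `I_{2j}^{k+1}` and `I_{2j+1}^{k+1}`. -/
noncomputable def cantorLeft (a : ℕ → ℝ) : ℕ → ℕ → ℝ
  | 0, _ => 0
  | k + 1, j =>
    if j % 2 = 0 then cantorLeft a k (j / 2)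
    else cantorLeft a k (j / 2) + cantorLen a (k + 1) (j - 1) + a (2 ^ k - 1 + j / 2)

/-- The Cantor set `C_a` associated to the gap sequence `a`. -/
noncomputable def assocCantor (a : ℕ → ℝ) : Set ℝ :=
  ⋂ k : ℕ, ⋃ j ∈ Finset.range (2 ^ k),
    Set.Icc (cantorLeft a k j) (cantorLeft a k j + cantorLen a k j)

/-- `avgLen a n = s_n^{(a)} = 2 ^ (-n) ∑_{j ≥ 2 ^ n - 1} a j`, the average length of
the step-`n` intervals of `C_a` (with `a` 0-indexed, so this matches
`2^{-n} Σ_{j=2^n}^∞ a_j` for the 1-indexed sequence of the paper). -/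
noncomputable def avgLen (a : ℕ → ℝ) (n : ℕ) : ℝ :=
  (∑' j : ℕ, a (2 ^ n - 1 + j)) / 2 ^ n

/-- The gap sequence of the central Cantor set with ratio sequence `r`
(0-indexed): the gap `a i` has length `r 0 ⋯ r (n-1) * (1 - 2 * r n)` where
`2 ^ n - 1 ≤ i ≤ 2 ^ (n+1) - 2`, i.e. `n = log₂ (i + 1)`.  The central Cantor
set `C{r_j}` itself is `assocCantor (centralGaps r)`. -/
noncomputable def centralGaps (r : ℕ → ℝ) (i : ℕ) : ℝ :=
  (∏ j ∈ Finset.range (Nat.log 2 (i + 1)), r j) * (1 - 2 * r (Nat.log 2 (i + 1)))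

/-- A decreasing sequence `a` is doubling if `a n ≤ τ * a (2 * n)` (1-indexed)
for some constant `τ`; with 0-indexing this reads `a n ≤ τ * a (2 * n + 1)`. -/
def IsDoubling (a : ℕ → ℝ) : Prop :=
  ∃ τ : ℝ, ∀ n : ℕ, a n ≤ τ * a (2 * n + 1)

/-- A general sequence is doubling if its decreasing rearrangement is. -/
def IsDoublingGen (a : ℕ → ℝ) : Prop :=
  ∃ σ : Equiv.Perm ℕ, Antitone (a ∘ σ) ∧ IsDoubling (a ∘ σ)

/-! A point `x` of `E` is the total length of the gaps to its left, because `E` is Lebesgue-null,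
while `π x` is the total `b`-length of the same gaps.  For `x < y` in `E` both `y - x` and
`π y - π x` are therefore sums over the gaps lying between `x` and `y`, and the termwise bounds
`c⁻¹ ≤ a n / b n ≤ c` make `π` bi-Lipschitz on `E`.  Being increasing and continuous on the compact
set `E`, `π` maps the gap `(p n, q n)` onto the gap `(π (p n), π (p n) + b n)` and `E` onto the
complement of these gaps.  Covering numbers of balls change only by bounded factors under a
bi-Lipschitz map, so neither the Assouad nor the Lower Assouad dimension changes. -/

open Metric Bornology MeasureTheory Function

lemma coverNum_set_nonempty {r : ℝ} (hr : 0 < r) {F : Set ℝ} (hF : IsBounded F) :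
    {n : ℕ | ∃ S : Finset ℝ, S.card = n ∧ F ⊆ ⋃ x ∈ S, closedBall x r}.Nonempty := by
  obtain ⟨t, ht, hFt⟩ :=
    totallyBounded_iff.mp (hF.isCompact_closure.totallyBounded.subset subset_closure) r hr
  refine ⟨ht.toFinset.card, ht.toFinset, rfl, hFt.trans ?_⟩
  simp only [Finite.mem_toFinset]
  exact iUnion₂_mono fun y _ => ball_subset_closedBall

lemma one_le_coverNum {r : ℝ} (hr : 0 < r) {F : Set ℝ} (hF : IsBounded F) (hne : F.Nonempty) :
    1 ≤ coverNum r F := by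
  refine le_csInf (coverNum_set_nonempty hr hF) ?_
  rintro _ ⟨S, rfl, hS⟩
  obtain ⟨x, hx⟩ := hne
  obtain ⟨s, hs, -⟩ := mem_iUnion₂.mp (hS hx)
  exact Finset.card_pos.mpr ⟨s, hs⟩

lemma coverNum_le_of_mapsTo {S T : Set ℝ} {φ : ℝ → ℝ} {K r : ℝ} (hK : 0 ≤ K) (hr : 0 < r)
    (hT : IsBounded T) (hφ : MapsTo φ S T)
    (hco : ∀ u ∈ S, ∀ v ∈ S, |u - v| ≤ K * |φ u - φ v|) :
    coverNum (2 * K * r) S ≤ coverNum r T := by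
  obtain ⟨C, hC, hTC⟩ := Nat.sInf_mem (coverNum_set_nonempty hr hT)
  have : ∀ s, ∃ v, (∃ u ∈ S, φ u ∈ closedBall s r) → v ∈ S ∧ φ v ∈ closedBall s r := by
    intro s
    by_cases hs : ∃ u ∈ S, φ u ∈ closedBall s r
    · obtain ⟨u, hu⟩ := hs
      exact ⟨u, fun _ => hu⟩
    · exact ⟨0, fun h => absurd h hs⟩
  choose center hcenter using this
  suffices hcov : S ⊆ ⋃ x ∈ C.image center, closedBall x (2 * K * r) from
    calc coverNum (2 * K * r) S ≤ (C.image center).card := Nat.sInf_le ⟨_, rfl, hcov⟩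
      _ ≤ C.card := Finset.card_image_le
      _ = coverNum r T := hC
  intro u hu
  obtain ⟨s, hs, hus⟩ := mem_iUnion₂.mp (hTC (hφ hu))
  obtain ⟨hvS, hvs⟩ := hcenter s ⟨u, hu, hus⟩
  refine mem_iUnion₂.mpr ⟨center s, Finset.mem_image_of_mem _ hs, ?_⟩
  have hφuv : dist (φ u) (φ (center s)) ≤ 2 * r := by
    rw [mem_closedBall] at hus hvs
    linarith [dist_triangle_right (φ u) (φ (center s)) s]
  rw [Real.dist_eq] at hφuv
  rw [mem_closedBall, Real.dist_eq]
  calc |u - center s| ≤ K * |φ u - φ (center s)| := hco u hu _ hvS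
    _ ≤ K * (2 * r) := by gcongr
    _ = 2 * K * r := by ring

/-- `dimA F` is `sInf (assouadExponents F)`. -/
def assouadExponents (F : Set ℝ) : Set ℝ :=
  {α : ℝ | ∃ c > (0 : ℝ), ∃ ρ > (0 : ℝ), ∀ x ∈ F, ∀ r R : ℝ,
    0 < r → r < R → R < ρ →
    (coverNum r (Metric.closedBall x R ∩ F) : ℝ) ≤ c * (R / r) ^ α}

/-- `dimL F` is `sSup (lowerAssouadExponents F)`. -/
def lowerAssouadExponents (F : Set ℝ) : Set ℝ :=
  {α : ℝ | ∃ c > (0 : ℝ), ∃ ρ > (0 : ℝ), ∀ x ∈ F, ∀ r R : ℝ,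
    0 < r → r < R → R < ρ →
    c * (R / r) ^ α ≤ (coverNum r (Metric.closedBall x R ∩ F) : ℝ)}

lemma mem_lowerAssouadExponents {F : Set ℝ} {α c ρ M : ℝ} (hc : 0 < c) (hρ : 0 < ρ) (hM : 1 ≤ M)
    (h : ∀ x ∈ F, ∀ r R : ℝ, 0 < r → M * r < R → R < ρ →
      c * (R / r) ^ α ≤ (coverNum r (closedBall x R ∩ F) : ℝ)) :
    α ∈ lowerAssouadExponents F := by
  have hM0 : 0 < M := one_pos.trans_le hM
  refine ⟨min c (M ^ (-|α|)), lt_min hc (by positivity), ρ, hρ, fun x hx r R hr hrR hRρ => ?_⟩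
  have hR : 0 < R := hr.trans hrR
  rcases lt_or_ge (M * r) R with hMr | hMr
  · exact (mul_le_mul_of_nonneg_right (min_le_left _ _) (by positivity)).trans
      (h x hx r R hr hMr hRρ)
  -- for `R ≤ M r` the bound only asks for one ball
  have hpow : (R / r) ^ α ≤ M ^ |α| :=
    (Real.rpow_le_rpow_of_exponent_le ((one_le_div hr).2 hrR.le) (le_abs_self α)).trans
      (Real.rpow_le_rpow (by positivity) ((div_le_iff₀ hr).2 hMr) (abs_nonneg α))
  calc min c (M ^ (-|α|)) * (R / r) ^ α ≤ M ^ (-|α|) * M ^ |α| :=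
        mul_le_mul (min_le_right _ _) hpow (by positivity) (by positivity)
    _ = 1 := by rw [← Real.rpow_add hM0, neg_add_cancel, Real.rpow_zero]
    _ ≤ _ := by
        exact_mod_cast one_le_coverNum hr (isBounded_closedBall.subset inter_subset_left)
          ⟨x, mem_closedBall_self (hr.trans hrR).le, hx⟩

def BiLipschitzOn (K : ℝ) (f : ℝ → ℝ) (E : Set ℝ) : Prop :=
  ∀ x ∈ E, ∀ y ∈ E, K⁻¹ * |x - y| ≤ |f x - f y| ∧ |f x - f y| ≤ K * |x - y|

lemma biLipschitzOn_of_sub_le {K : ℝ} {f : ℝ → ℝ} {E : Set ℝ} (hK : 0 < K)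
    (h : ∀ x ∈ E, ∀ y ∈ E, x ≤ y → f y - f x ≤ K * (y - x) ∧ y - x ≤ K * (f y - f x)) :
    BiLipschitzOn K f E := by
  have key : ∀ x ∈ E, ∀ y ∈ E, x ≤ y →
      K⁻¹ * |x - y| ≤ |f x - f y| ∧ |f x - f y| ≤ K * |x - y| := by
    intro x hx y hy hxy
    obtain ⟨hup, hlow⟩ := h x hx y hy hxy
    have hf : 0 ≤ f y - f x := by
      by_contra! hneg
      linarith [mul_neg_of_pos_of_neg hK hneg]
    rw [abs_sub_comm x, abs_sub_comm (f x), abs_of_nonneg (sub_nonneg.2 hxy), abs_of_nonneg hf,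
      inv_mul_le_iff₀ hK]
    exact ⟨hlow, hup⟩
  intro x hx y hy
  rcases le_total x y with hxy | hyx
  · exact key x hx y hy hxy
  · rw [abs_sub_comm x, abs_sub_comm (f x)]
    exact key y hy x hx hyx

namespace BiLipschitzOn

variable {K : ℝ} {f : ℝ → ℝ} {E : Set ℝ}

lemma abs_sub_le_mul (hf : BiLipschitzOn K f E) (hK : 0 < K) {x y : ℝ} (hx : x ∈ E)
    (hy : y ∈ E) : |x - y| ≤ K * |f x - f y| :=
  (inv_mul_le_iff₀ hK).1 (hf x hx y hy).1

lemma injOn (hf : BiLipschitzOn K f E) (hK : 0 < K) : InjOn f E := by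
  intro x hx y hy hxy
  have := hf.abs_sub_le_mul hK hx hy
  rw [hxy, sub_self, abs_zero, mul_zero] at this
  exact sub_eq_zero.mp (abs_nonpos_iff.mp this)

lemma continuousOn (hf : BiLipschitzOn K f E) : ContinuousOn f E := by
  refine (LipschitzOnWith.of_dist_le_mul (K := K.toNNReal) fun x hx y hy => ?_).continuousOn
  rw [Real.dist_eq, Real.dist_eq, Real.coe_toNNReal']
  exact (hf x hx y hy).2.trans (by gcongr; exact le_max_left _ _)

lemma invFunOn (hf : BiLipschitzOn K f E) (hK : 0 < K) :
    BiLipschitzOn K (Function.invFunOn f E) (f '' E) := by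
  have hinv := (hf.injOn hK).leftInvOn_invFunOn
  rintro _ ⟨x, hx, rfl⟩ _ ⟨y, hy, rfl⟩
  rw [hinv hx, hinv hy]
  exact ⟨(inv_mul_le_iff₀ hK).2 (hf x hx y hy).2, hf.abs_sub_le_mul hK hx hy⟩

lemma assouadExponents_subset (hf : BiLipschitzOn K f E) (hK : 1 ≤ K) :
    assouadExponents E ⊆ assouadExponents (f '' E) := by
  rintro α ⟨c, hc, ρ, hρ, hE⟩
  have hK0 : 0 < K := one_pos.trans_le hK
  have hg := hf.invFunOn hK0
  have hinv := (hf.injOn hK0).leftInvOn_invFunOn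
  refine ⟨c * (2 * K ^ 2) ^ α, by positivity, ρ / K, by positivity, ?_⟩
  rintro _ ⟨x, hx, rfl⟩ r R hr hrR hRρ
  have hR : 0 < R := hr.trans hrR
  have hr' : 0 < r / (2 * K) := by positivity
  have hcov : coverNum r (closedBall (f x) R ∩ f '' E) ≤
      coverNum (r / (2 * K)) (closedBall x (K * R) ∩ E) := by
    have hmaps : MapsTo (Function.invFunOn f E) (closedBall (f x) R ∩ f '' E)
        (closedBall x (K * R) ∩ E) := by
      rintro u ⟨hu, huE⟩
      refine ⟨?_, invFunOn_mem huE⟩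
      rw [mem_closedBall, Real.dist_eq, ← hinv hx]
      rw [mem_closedBall, Real.dist_eq] at hu
      exact (hg u huE _ (mem_image_of_mem f hx)).2.trans (by gcongr)
    simpa only [mul_div_cancel₀ r (by positivity : 2 * K ≠ 0)] using
      coverNum_le_of_mapsTo hK0.le hr' (isBounded_closedBall.subset inter_subset_left) hmaps
        fun u hu v hv => hg.abs_sub_le_mul hK0 hu.2 hv.2
  have hbound := hE x hx (r / (2 * K)) (K * R) hr'
    (by
      calc r / (2 * K) < r := div_lt_self hr (by nlinarith)
        _ < R := hrR
        _ ≤ K * R := le_mul_of_one_le_left hR.le hK)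
    (by rwa [lt_div_iff₀' hK0] at hRρ)
  calc (coverNum r (closedBall (f x) R ∩ f '' E) : ℝ)
      ≤ coverNum (r / (2 * K)) (closedBall x (K * R) ∩ E) := by exact_mod_cast hcov
    _ ≤ c * (K * R / (r / (2 * K))) ^ α := hbound
    _ = c * (2 * K ^ 2) ^ α * (R / r) ^ α := by
        rw [show K * R / (r / (2 * K)) = 2 * K ^ 2 * (R / r) by field_simp,
          Real.mul_rpow (x := 2 * K ^ 2) (by positivity) (by positivity), mul_assoc]

lemma lowerAssouadExponents_subset (hf : BiLipschitzOn K f E) (hK : 1 ≤ K) :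
    lowerAssouadExponents E ⊆ lowerAssouadExponents (f '' E) := by
  rintro α ⟨c, hc, ρ, hρ, hE⟩
  have hK0 : 0 < K := one_pos.trans_le hK
  refine mem_lowerAssouadExponents (c := c * (2 * K ^ 2) ^ (-α)) (M := 2 * K ^ 2) (by positivity)
    hρ (by nlinarith) ?_
  rintro _ ⟨x, hx, rfl⟩ r R hr hMr hRρ
  have hR : 0 < R := lt_trans (by positivity) hMr
  have hcov : coverNum (2 * K * r) (closedBall x (R / K) ∩ E) ≤
      coverNum r (closedBall (f x) R ∩ f '' E) := by
    refine coverNum_le_of_mapsTo hK0.le hr (isBounded_closedBall.subset inter_subset_left)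
      (fun u ⟨hu, huE⟩ => ⟨?_, mem_image_of_mem f huE⟩)
      fun u hu v hv => hf.abs_sub_le_mul hK0 hu.2 hv.2
    rw [mem_closedBall, Real.dist_eq] at hu ⊢
    calc |f u - f x| ≤ K * |u - x| := (hf u huE x hx).2
      _ ≤ K * (R / K) := by gcongr
      _ = R := mul_div_cancel₀ R hK0.ne'
  have hbound := hE x hx (2 * K * r) (R / K) (by positivity)
    (by rw [lt_div_iff₀ hK0]; linarith [show 2 * K * r * K = 2 * K ^ 2 * r by ring])
    ((div_le_self hR.le hK).trans_lt hRρ)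
  calc c * (2 * K ^ 2) ^ (-α) * (R / r) ^ α = c * (R / K / (2 * K * r)) ^ α := by
        rw [show R / K / (2 * K * r) = R / r / (2 * K ^ 2) by field_simp,
          Real.div_rpow (x := R / r) (by positivity) (by positivity), Real.rpow_neg (by positivity)]
        ring
    _ ≤ coverNum (2 * K * r) (closedBall x (R / K) ∩ E) := hbound
    _ ≤ coverNum r (closedBall (f x) R ∩ f '' E) := by exact_mod_cast hcov

lemma dimA_image (hf : BiLipschitzOn K f E) (hK : 1 ≤ K) : dimA (f '' E) = dimA E := by
  have hK0 : 0 < K := one_pos.trans_le hK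
  have hback := (hf.invFunOn hK0).assouadExponents_subset hK
  rw [(hf.injOn hK0).leftInvOn_invFunOn.image_image] at hback
  show sInf (assouadExponents _) = sInf (assouadExponents _)
  rw [hback.antisymm (hf.assouadExponents_subset hK)]

lemma dimL_image (hf : BiLipschitzOn K f E) (hK : 1 ≤ K) : dimL (f '' E) = dimL E := by
  have hK0 : 0 < K := one_pos.trans_le hK
  have hback := (hf.invFunOn hK0).lowerAssouadExponents_subset hK
  rw [(hf.injOn hK0).leftInvOn_invFunOn.image_image] at hback
  show sSup (lowerAssouadExponents _) = sSup (lowerAssouadExponents _)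
  rw [hback.antisymm (hf.lowerAssouadExponents_subset hK)]

end BiLipschitzOn

lemma Ioo_subset_Icc_iff_of_lt {α : Type*} [LinearOrder α] [DenselyOrdered α] [TopologicalSpace α]
    [OrderTopology α] {a b c d : α} (hab : a < b) :
    Ioo a b ⊆ Icc c d ↔ c ≤ a ∧ b ≤ d :=
  ⟨fun h => (Icc_subset_Icc_iff hab.le).1 (closure_Ioo hab.ne ▸ closure_minimal h isClosed_Icc),
    fun h => Ioo_subset_Icc_self.trans (Icc_subset_Icc h.1 h.2)⟩

def gapComplement (L : ℝ) (p q : ℕ → ℝ) : Set ℝ :=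
  Icc 0 L \ ⋃ n, Ioo (p n) (q n)

structure IsGapFamily (L : ℝ) (p q : ℕ → ℝ) : Prop where
  lt : ∀ n, p n < q n
  subset_Icc : ∀ n, Ioo (p n) (q n) ⊆ Icc 0 L
  pairwise_disjoint : Pairwise (Disjoint on fun n => Ioo (p n) (q n))

/-- For `x` in the complement of the gaps, `{n | q n ≤ x}` indexes the gaps contained in
`[0, x]`. -/
noncomputable def gapSum (q w : ℕ → ℝ) (x : ℝ) : ℝ :=
  ∑' n : {n | q n ≤ x}, w n

lemma isCompact_gapComplement (L : ℝ) (p q : ℕ → ℝ) : IsCompact (gapComplement L p q) :=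
  isCompact_Icc.diff (isOpen_iUnion fun _ => isOpen_Ioo)

lemma exists_mem_Ioo_of_notMem_gapComplement {L x : ℝ} {p q : ℕ → ℝ} (hx : x ∈ Icc 0 L)
    (hxG : x ∉ gapComplement L p q) : ∃ n, x ∈ Ioo (p n) (q n) := by
  by_contra hc
  exact hxG ⟨hx, fun hU => hc (mem_iUnion.1 hU)⟩

lemma mem_gapComplement_iff {L x : ℝ} {p q : ℕ → ℝ} :
    x ∈ gapComplement L p q ↔ x ∈ Icc 0 L ∧ ∀ n, x ≤ p n ∨ q n ≤ x := by
  simp only [gapComplement, mem_sdiff, mem_iUnion, mem_Ioo, not_exists, not_and_or, not_lt]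

section GapSum

variable {q w w' : ℕ → ℝ}

lemma gapSum_nonneg (hw : ∀ n, 0 ≤ w n) (x : ℝ) : 0 ≤ gapSum q w x :=
  tsum_nonneg fun n => hw n

lemma gapSum_eq_zero {x : ℝ} (hx : ∀ n, x < q n) : gapSum q w x = 0 :=
  (tsum_congr_set_coe w (eq_empty_of_forall_notMem fun n hn => (hx n).not_ge hn)).trans tsum_empty

lemma gapSum_eq_tsum {x : ℝ} (hx : ∀ n, q n ≤ x) : gapSum q w x = ∑' n, w n :=
  (tsum_congr_set_coe w (eq_univ_of_forall hx)).trans (tsum_univ w)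

lemma monotone_gapSum (hw0 : ∀ n, 0 ≤ w n) (hw : Summable w) : Monotone (gapSum q w) := by
  intro x y hxy
  simp only [gapSum, tsum_subtype]
  exact (hw.indicator _).tsum_le_tsum
    (indicator_le_indicator_of_subset (fun n hn => le_trans hn hxy) hw0) (hw.indicator _)

lemma gapSum_mul_sub (hw : Summable w) (hw' : Summable w') (c x : ℝ) :
    gapSum q (fun n => c * w n - w' n) x = c * gapSum q w x - gapSum q w' x := by
  have hcw : Summable fun n : {n | q n ≤ x} => c * w n := (hw.subtype _).mul_left c
  have hw'x : Summable fun n : {n | q n ≤ x} => w' n := hw'.subtype _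
  rw [gapSum, hcw.tsum_sub hw'x, tsum_mul_left, gapSum, gapSum]

lemma gapSum_sub_le_mul_sub (hw : Summable w) (hw' : Summable w') {c : ℝ}
    (hle : ∀ n, w' n ≤ c * w n) {x y : ℝ} (hxy : x ≤ y) :
    gapSum q w' y - gapSum q w' x ≤ c * (gapSum q w y - gapSum q w x) := by
  -- `x ↦ c * gapSum q w x - gapSum q w' x` is itself a gap sum with nonnegative weights
  have := monotone_gapSum (q := q) (fun n => sub_nonneg.2 (hle n)) ((hw.mul_left c).sub hw') hxy
  rw [gapSum_mul_sub hw hw', gapSum_mul_sub hw hw'] at this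
  linarith

end GapSum

namespace IsGapFamily

variable {L : ℝ} {p q : ℕ → ℝ}

lemma nonneg (h : IsGapFamily L p q) (n : ℕ) : 0 ≤ p n :=
  ((Ioo_subset_Icc_iff_of_lt (h.lt n)).1 (h.subset_Icc n)).1

lemma le (h : IsGapFamily L p q) (n : ℕ) : q n ≤ L :=
  ((Ioo_subset_Icc_iff_of_lt (h.lt n)).1 (h.subset_Icc n)).2

lemma le_or_le (h : IsGapFamily L p q) {m n : ℕ} (hmn : m ≠ n) : q m ≤ p n ∨ q n ≤ p m := by
  have := Ioo_disjoint_Ioo.1 (h.pairwise_disjoint hmn)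
  rcases min_le_iff.1 this with h1 | h1 <;> rcases le_max_iff.1 h1 with h2 | h2 <;>
    first | exact .inl h2 | exact .inr h2 | exact absurd h2 (h.lt _).not_ge

lemma zero_mem (h : IsGapFamily L p q) : 0 ∈ gapComplement L p q :=
  mem_gapComplement_iff.2 ⟨⟨le_rfl, (h.nonneg 0).trans ((h.lt 0).le.trans (h.le 0))⟩,
    fun n => .inl (h.nonneg n)⟩

lemma upper_mem (h : IsGapFamily L p q) : L ∈ gapComplement L p q :=
  mem_gapComplement_iff.2 ⟨⟨(h.nonneg 0).trans ((h.lt 0).le.trans (h.le 0)), le_rfl⟩,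
    fun n => .inr (h.le n)⟩

lemma left_mem (h : IsGapFamily L p q) (n : ℕ) : p n ∈ gapComplement L p q := by
  refine mem_gapComplement_iff.2 ⟨⟨h.nonneg n, (h.lt n).le.trans (h.le n)⟩, fun m => ?_⟩
  rcases eq_or_ne m n with rfl | hmn
  · exact .inl le_rfl
  · exact (h.le_or_le hmn).symm.imp (fun hnm => ((h.lt n).trans_le hnm).le) id

lemma right_mem (h : IsGapFamily L p q) (n : ℕ) : q n ∈ gapComplement L p q := by
  refine mem_gapComplement_iff.2 ⟨⟨(h.nonneg n).trans (h.lt n).le, h.le n⟩, fun m => ?_⟩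
  rcases eq_or_ne m n with rfl | hmn
  · exact .inr le_rfl
  · exact (h.le_or_le hmn).symm.imp id (fun hqp => hqp.trans (h.lt n).le)

lemma exists_eq_of_forall_notMem_Ioo (h : IsGapFamily L p q) {x w : ℝ}
    (hx : x ∈ gapComplement L p q) (hw : w ∈ gapComplement L p q) (hxw : x < w)
    (hempty : ∀ z ∈ gapComplement L p q, z ∉ Ioo x w) : ∃ m, p m = x ∧ q m = w := by
  have hmid : (x + w) / 2 ∈ Ioo x w := ⟨by linarith, by linarith⟩
  obtain ⟨m, hpm, hqm⟩ := exists_mem_Ioo_of_notMem_gapComplement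
    ⟨by linarith [hx.1.1], by linarith [hw.1.2]⟩ fun hG => hempty _ hG hmid
  have hpx : p m ≤ x := not_lt.1 fun hxp => hempty _ (h.left_mem m) ⟨hxp, hpm.trans hmid.2⟩
  have hwq : w ≤ q m := not_lt.1 fun hqw => hempty _ (h.right_mem m) ⟨hmid.1.trans hqm, hqw⟩
  have hxp := ((mem_gapComplement_iff.1 hx).2 m).resolve_right (by linarith)
  have hqw := ((mem_gapComplement_iff.1 hw).2 m).resolve_left (by linarith)
  exact ⟨m, le_antisymm hpx hxp, le_antisymm hqw hwq⟩

lemma gapSum_right (h : IsGapFamily L p q) {w : ℕ → ℝ} (hw : Summable w) (n : ℕ) :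
    gapSum q w (q n) = gapSum q w (p n) + w n := by
  have hset : {m | q m ≤ q n} = {m | q m ≤ p n} ∪ {n} := by
    ext m
    simp only [mem_ofPred_eq, mem_union, mem_singleton_iff]
    refine ⟨fun hm => or_iff_not_imp_right.2 fun hmn => ?_,
      fun hm => hm.elim (fun hm => hm.trans (h.lt n).le) fun hm => hm ▸ le_rfl⟩
    exact (h.le_or_le hmn).resolve_right fun hnm => ((h.lt m).trans_le hm).not_ge hnm
  have hdisj : Disjoint {m | q m ≤ p n} {n} :=
    disjoint_singleton_right.2 (h.lt n).not_ge
  rw [gapSum, tsum_congr_set_coe w hset, (hw.subtype _).tsum_union_disjoint hdisj (hw.subtype _),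
    tsum_singleton, gapSum]

lemma tsum_subset_Icc_eq_gapSum (h : IsGapFamily L p q) (w : ℕ → ℝ) (x : ℝ) :
    ∑' n : {n : ℕ // Ioo (p n) (q n) ⊆ Icc 0 x}, w n.1 = gapSum q w x :=
  tsum_congr_set_coe w <| by
    ext n
    exact (Ioo_subset_Icc_iff_of_lt (h.lt n)).trans (and_iff_right (h.nonneg n))

lemma volume_gapComplement (h : IsGapFamily L p q) (hs : Summable fun n => q n - p n)
    (hL : ∑' n, (q n - p n) = L) : volume (gapComplement L p q) = 0 := by
  have hU : volume (⋃ n, Ioo (p n) (q n)) = ENNReal.ofReal L := by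
    rw [measure_iUnion h.pairwise_disjoint fun _ => measurableSet_Ioo]
    simp only [Real.volume_Ioo]
    rw [← ENNReal.ofReal_tsum_of_nonneg (fun n => (sub_pos.2 (h.lt n)).le) hs, hL]
  rw [gapComplement, measure_sdiff (iUnion_subset h.subset_Icc)
    (MeasurableSet.iUnion fun _ => measurableSet_Ioo).nullMeasurableSet
    (hU ▸ ENNReal.ofReal_ne_top), hU, Real.volume_Icc, sub_zero, tsub_self]

lemma gapSum_lengths_eq_self (h : IsGapFamily L p q) (hs : Summable fun n => q n - p n)
    (hL : ∑' n, (q n - p n) = L) {x : ℝ} (hx : x ∈ gapComplement L p q) :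
    gapSum q (fun n => q n - p n) x = x := by
  set T := {n | q n ≤ x}
  have hvolT : volume (⋃ n ∈ T, Ioo (p n) (q n)) =
      ENNReal.ofReal (gapSum q (fun n => q n - p n) x) := by
    rw [measure_biUnion T.to_countable (h.pairwise_disjoint.set_pairwise T)
      fun _ _ => measurableSet_Ioo]
    simp only [Real.volume_Ioo]
    rw [gapSum, ENNReal.ofReal_tsum_of_nonneg (f := fun n : T => q n - p n)
      (fun n => (sub_pos.2 (h.lt n)).le) (hs.subtype T)]
  have hsub : ⋃ n ∈ T, Ioo (p n) (q n) ⊆ Icc 0 x :=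
    iUnion₂_subset fun n hn => Ioo_subset_Icc_self.trans (Icc_subset_Icc (h.nonneg n) hn)
  have hcover : Icc 0 x ⊆ gapComplement L p q ∪ ⋃ n ∈ T, Ioo (p n) (q n) := by
    intro z hz
    refine or_iff_not_imp_left.2 fun hzE => ?_
    obtain ⟨n, hpz, hzq⟩ :=
      exists_mem_Ioo_of_notMem_gapComplement ⟨hz.1, hz.2.trans hx.1.2⟩ hzE
    have hqx : q n ≤ x := ((mem_gapComplement_iff.1 hx).2 n).resolve_left (by linarith [hz.2])
    exact mem_biUnion hqx ⟨hpz, hzq⟩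
  have hx0 : 0 ≤ x := hx.1.1
  refine (ENNReal.ofReal_eq_ofReal_iff
    (gapSum_nonneg (fun n => (sub_pos.2 (h.lt n)).le) x) hx0).1 (le_antisymm ?_ ?_)
  · calc ENNReal.ofReal (gapSum q (fun n => q n - p n) x)
        = volume (⋃ n ∈ T, Ioo (p n) (q n)) := hvolT.symm
      _ ≤ volume (Icc 0 x) := measure_mono hsub
      _ = ENNReal.ofReal x := by rw [Real.volume_Icc, sub_zero]
  · calc ENNReal.ofReal x = volume (Icc 0 x) := by rw [Real.volume_Icc, sub_zero]
      _ ≤ volume (gapComplement L p q) + volume (⋃ n ∈ T, Ioo (p n) (q n)) :=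
          (measure_mono hcover).trans (measure_union_le _ _)
      _ = _ := by rw [h.volume_gapComplement hs hL, zero_add, hvolT]

lemma biLipschitzOn_gapSum (h : IsGapFamily L p q) (hs : Summable fun n => q n - p n)
    (hL : ∑' n, (q n - p n) = L) {w : ℕ → ℝ} (hw : Summable w) {c : ℝ} (hc : 0 < c)
    (hwc : ∀ n, w n ≤ c * (q n - p n)) (hcw : ∀ n, q n - p n ≤ c * w n) :
    BiLipschitzOn c (gapSum q w) (gapComplement L p q) := by
  refine biLipschitzOn_of_sub_le hc fun x hx y hy hxy => ⟨?_, ?_⟩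
  · simpa only [h.gapSum_lengths_eq_self hs hL hx, h.gapSum_lengths_eq_self hs hL hy] using
      gapSum_sub_le_mul_sub (q := q) hs hw hwc hxy
  · simpa only [h.gapSum_lengths_eq_self hs hL hx, h.gapSum_lengths_eq_self hs hL hy] using
      gapSum_sub_le_mul_sub (q := q) hw hs hcw hxy

variable {f : ℝ → ℝ}

lemma map (h : IsGapFamily L p q) (hf : StrictMonoOn f (gapComplement L p q)) (hf0 : f 0 = 0) :
    IsGapFamily (f L) (f ∘ p) (f ∘ q) := by
  have hmono := hf.monotoneOn
  refine ⟨fun n => hf (h.left_mem n) (h.right_mem n) (h.lt n), fun n => ?_, fun m n hmn => ?_⟩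
  · exact Ioo_subset_Icc_self.trans (Icc_subset_Icc
      (hf0 ▸ hmono h.zero_mem (h.left_mem n) (h.nonneg n))
      (hmono (h.right_mem n) h.upper_mem (h.le n)))
  · rcases h.le_or_le hmn with hle | hle
    · exact Ioo_disjoint_Ioo.2 (min_le_of_left_le (le_max_of_le_right
        (hmono (h.right_mem m) (h.left_mem n) hle)))
    · exact Ioo_disjoint_Ioo.2 (min_le_of_right_le (le_max_of_le_left
        (hmono (h.right_mem n) (h.left_mem m) hle)))

lemma image_gapComplement_subset (h : IsGapFamily L p q)
    (hf : MonotoneOn f (gapComplement L p q)) (hf0 : f 0 = 0) :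
    f '' gapComplement L p q ⊆ gapComplement (f L) (f ∘ p) (f ∘ q) := by
  rintro _ ⟨u, hu, rfl⟩
  obtain ⟨hu0L, hugaps⟩ := mem_gapComplement_iff.1 hu
  refine mem_gapComplement_iff.2 ⟨⟨hf0 ▸ hf h.zero_mem hu hu0L.1, hf hu h.upper_mem hu0L.2⟩,
    fun n => ?_⟩
  exact (hugaps n).imp (hf hu (h.left_mem n)) (hf (h.right_mem n) hu)

lemma gapComplement_subset_image (h : IsGapFamily L p q)
    (hf : StrictMonoOn f (gapComplement L p q)) (hfc : ContinuousOn f (gapComplement L p q))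
    (hf0 : f 0 = 0) :
    gapComplement (f L) (f ∘ p) (f ∘ q) ⊆ f '' gapComplement L p q := by
  intro y hy
  obtain ⟨⟨hy0, hyL⟩, hygaps⟩ := mem_gapComplement_iff.1 hy
  set G := gapComplement L p q
  have hG : IsCompact G := isCompact_gapComplement L p q
  -- `x` is the last point of `G` mapped to or below `y`, `w` the first one mapped to or above it
  have hA : IsCompact (G ∩ f ⁻¹' Iic y) := hG.of_isClosed_subset
    (hfc.preimage_isClosed_of_isClosed hG.isClosed isClosed_Iic) inter_subset_left
  have hB : IsCompact (G ∩ f ⁻¹' Ici y) := hG.of_isClosed_subset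
    (hfc.preimage_isClosed_of_isClosed hG.isClosed isClosed_Ici) inter_subset_left
  obtain ⟨hxG, hxy⟩ := hA.sSup_mem ⟨0, h.zero_mem, show f 0 ≤ y from hf0.le.trans hy0⟩
  obtain ⟨hwG, hyw⟩ := hB.sInf_mem ⟨L, h.upper_mem, hyL⟩
  set x := sSup (G ∩ f ⁻¹' Iic y)
  set w := sInf (G ∩ f ⁻¹' Ici y)
  rcases (show f x ≤ y from hxy).eq_or_lt with hfx | hfx
  · exact ⟨x, hxG, hfx⟩
  rcases (show y ≤ f w from hyw).eq_or_lt with hfw | hfw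
  · exact ⟨w, hwG, hfw.symm⟩
  have hempty : ∀ z ∈ G, z ∉ Ioo x w := fun z hz ⟨hxz, hzw⟩ => (le_total (f z) y).elim
    (fun hzy => (le_csSup hA.bddAbove ⟨hz, hzy⟩).not_gt hxz)
    (fun hyz => (csInf_le hB.bddBelow ⟨hz, hyz⟩).not_gt hzw)
  obtain ⟨m, hpm, hqm⟩ :=
    h.exists_eq_of_forall_notMem_Ioo hxG hwG ((hf.lt_iff_lt hxG hwG).1 (hfx.trans hfw)) hempty
  exact absurd (hygaps m) (by simp only [comp_apply, hpm, hqm, not_or, not_le]; exact ⟨hfx, hfw⟩)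

lemma image_gapComplement (h : IsGapFamily L p q) (hf : StrictMonoOn f (gapComplement L p q))
    (hfc : ContinuousOn f (gapComplement L p q)) (hf0 : f 0 = 0) :
    f '' gapComplement L p q = gapComplement (f L) (f ∘ p) (f ∘ q) :=
  (h.image_gapComplement_subset hf.monotoneOn hf0).antisymm
    (h.gapComplement_subset_image hf hfc hf0)

lemma isComplementarySet {w : ℕ → ℝ} (h : IsGapFamily (∑' n, w n) p q)
    (hw : ∀ n, q n - p n = w n) : IsComplementarySet w (gapComplement (∑' n, w n) p q) :=
  ⟨fun n => Ioo (p n) (q n), fun n => ⟨p n, q n, h.lt n, hw n, rfl⟩, h.subset_Icc,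
    h.pairwise_disjoint, rfl⟩

end IsGapFamily

theorem equivalent_sequences_biLipschitz_general
    (a b : ℕ → ℝ) (hb : ∀ n, 0 < b n)
    (hsa : Summable a) (hsb : Summable b)
    (hequiv : ∃ c : ℝ, 1 ≤ c ∧ ∀ n, c⁻¹ ≤ a n / b n ∧ a n / b n ≤ c)
    (E : Set ℝ) (U : ℕ → Set ℝ)
    (hU : ∀ n, ∃ p q : ℝ, p < q ∧ q - p = a n ∧ U n = Set.Ioo p q)
    (hUsub : ∀ n, U n ⊆ Set.Icc 0 (∑' i, a i))
    (hUdisj : Pairwise (Function.onFun Disjoint U))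
    (hE : E = Set.Icc 0 (∑' i, a i) \ ⋃ n, U n)
    (π : ℝ → ℝ)
    (hπ : ∀ x : ℝ, π x = ∑' n : {n : ℕ // U n ⊆ Set.Icc 0 x}, b n.1) :
    (∃ K : ℝ, 1 ≤ K ∧ ∀ x ∈ E, ∀ y ∈ E,
        K⁻¹ * |x - y| ≤ |π x - π y| ∧ |π x - π y| ≤ K * |x - y|) ∧
    IsComplementarySet b (π '' E) ∧
    dimA (π '' E) = dimA E ∧ dimL (π '' E) = dimL E := by
  obtain ⟨c, hc1, hcab⟩ := hequiv
  have hc0 : 0 < c := one_pos.trans_le hc1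
  choose p q hpq hlen hUpq using hU
  obtain rfl : U = fun n => Ioo (p n) (q n) := funext hUpq
  obtain rfl : a = fun n => q n - p n := funext fun n => (hlen n).symm
  have hG : IsGapFamily (∑' n, (q n - p n)) p q := ⟨hpq, hUsub, hUdisj⟩
  obtain rfl : E = gapComplement (∑' n, (q n - p n)) p q := hE
  obtain rfl : π = gapSum q b := funext fun x => (hπ x).trans (hG.tsum_subset_Icc_eq_gapSum b x)
  have hbi : BiLipschitzOn c (gapSum q b) (gapComplement (∑' n, (q n - p n)) p q) :=
    hG.biLipschitzOn_gapSum hsa rfl hsb hc0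
      (fun n => (inv_mul_le_iff₀ hc0).1 ((le_div_iff₀ (hb n)).1 (hcab n).1))
      (fun n => (div_le_iff₀ (hb n)).1 (hcab n).2)
  have hmono := ((monotone_gapSum (fun n => (hb n).le) hsb).monotoneOn _).strictMonoOn_of_injOn
    (hbi.injOn hc0)
  have h0 : gapSum q b 0 = 0 := gapSum_eq_zero fun n => (hG.nonneg n).trans_lt (hpq n)
  have hL : gapSum q b (∑' n, (q n - p n)) = ∑' n, b n := gapSum_eq_tsum hG.le
  have hmap := hG.map hmono h0
  rw [hL] at hmap
  refine ⟨⟨c, hc1, hbi⟩, ?_, hbi.dimA_image hc1, hbi.dimL_image hc1⟩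
  rw [hG.image_gapComplement hmono hbi.continuousOn h0, hL]
  exact hmap.isComplementarySet fun n => sub_eq_of_eq_add' (hG.gapSum_right hsb n)

/-- equivalent sequences give bi-Lipschitz corresponding
complementary sets, hence equal Assouad and Lower Assouad dimensions. -/
theorem equivalent_sequences_biLipschitz
    (a b : ℕ → ℝ) (ha : ∀ n, 0 < a n) (hb : ∀ n, 0 < b n)
    (hsa : Summable a) (hsb : Summable b)
    (hequiv : ∃ c : ℝ, 1 ≤ c ∧ ∀ n, c⁻¹ ≤ a n / b n ∧ a n / b n ≤ c)
    (E : Set ℝ) (U : ℕ → Set ℝ)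
    (hU : ∀ n, ∃ p q : ℝ, p < q ∧ q - p = a n ∧ U n = Set.Ioo p q)
    (hUsub : ∀ n, U n ⊆ Set.Icc 0 (∑' i, a i))
    (hUdisj : Pairwise (Function.onFun Disjoint U))
    (hE : E = Set.Icc 0 (∑' i, a i) \ ⋃ n, U n)
    (π : ℝ → ℝ)
    (hπ : ∀ x : ℝ, π x = ∑' n : {n : ℕ // U n ⊆ Set.Icc 0 x}, b n.1) :
    (∃ K : ℝ, 1 ≤ K ∧ ∀ x ∈ E, ∀ y ∈ E,
        K⁻¹ * |x - y| ≤ |π x - π y| ∧ |π x - π y| ≤ K * |x - y|) ∧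
    IsComplementarySet b (π '' E) ∧
    dimA (π '' E) = dimA E ∧ dimL (π '' E) = dimL E :=
  equivalent_sequences_biLipschitz_general a b hb hsa hsb hequiv E U hU hUsub hUdisj hE π hπ
end

section
/- Let a be a positive, decreasing, summable sequence and C_a the associated Cantor set. Then dim_L C_a = sup{β : there exist k_β and n_β such that for all k ≥ k_β and all n ≥ n_β, (n log 2)/log(s_k/s_{k+n}) ≥ β}. -/
open scoped BigOperators
open Set

open Finset Filter Topology

/-!
Because `a` is decreasing, the step-`k` intervals of `C_a` shrink from left to right and `s_k` is
their average length, so every step-`(k + 1)` interval has length between `s_{k+2}` and `s_k`.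

Lower bound: if `s_{ℓ+1} ≤ R < s_ℓ`, the step-`(ℓ + 2)` interval containing `x` lies in `B(x, R)`,
and the left endpoints of its `2 ^ n` subintervals of step `ℓ + 2 + n` are `2 r`-separated points
of `C_a` as long as `2 r < s_{ℓ+n+3}`. So `N_r(B(x, R) ∩ C_a) ≥ 2 ^ n` with
`R / r ≤ 2 s_ℓ / s_{ℓ+n+4}`.

Upper bound: `B(0, |I_k^0|) ∩ C_a = I_k^0 ∩ C_a` is covered by `2 ^ (n + 1)` balls of radius
`|I_{k+n+1}^0| / 2 ≤ s_{k+n} / 2`, while `|I_k^0| ≥ s_k`.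

Comparing `(R / r) ^ α` with `2 ^ n` at these scales gives the two inequalities.
-/

lemma sum_range_mul_eq_sum_sum {M : Type*} [AddCommMonoid M] (f : ℕ → M) (B J : ℕ) :
    ∑ i ∈ range (J * B), f i = ∑ j ∈ range J, ∑ i ∈ range B, f (B * j + i) := by
  induction J with
  | zero => simp
  | succ J ih => rw [add_mul, one_mul, sum_range_add, ih, sum_range_succ, mul_comm B J]

lemma exists_le_and_lt_of_tendsto_zero {u : ℕ → ℝ} (hu : Tendsto u atTop (𝓝 0)) {t : ℝ}
    (ht : 0 < t) (m : ℕ) : ∃ n, u (m + n + 1) ≤ t ∧ (n ≠ 0 → t < u (m + n)) := by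
  obtain ⟨N, hN⟩ := eventually_atTop.1 (hu.eventually (ge_mem_nhds ht))
  have hex : ∃ n, u (m + n + 1) ≤ t := ⟨N, hN _ (by omega)⟩
  refine ⟨Nat.find hex, Nat.find_spec hex, fun hn => ?_⟩
  have := Nat.find_min hex (Nat.sub_one_lt hn)
  rwa [not_le, add_assoc, Nat.sub_add_cancel (Nat.one_le_iff_ne_zero.2 hn)] at this

lemma csSup_eq_csSup_of_forall_lt {α : Type*} [ConditionallyCompleteLinearOrder α]
    [DenselyOrdered α] {S T : Set α} {b : α} (hT : BddAbove T) (hbT : b ∈ T)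
    (hTS : ∀ β ∈ T, b ≤ β → β ∈ S) (hST : ∀ γ ∈ S, ∀ β, b < β → β < γ → β ∈ T) :
    sSup S = sSup T := by
  have hbS : b ∈ S := hTS b hbT le_rfl
  have hS : ∀ γ ∈ S, γ ≤ sSup T := fun γ hγ => le_of_not_gt fun hlt => by
    obtain ⟨β, hTβ, hβγ⟩ := exists_between hlt
    exact hTβ.not_ge (le_csSup hT (hST γ hγ β ((le_csSup hT hbT).trans_lt hTβ) hβγ))
  have hSb : BddAbove S := ⟨sSup T, hS⟩
  refine le_antisymm (csSup_le ⟨b, hbS⟩ hS) (csSup_le ⟨b, hbT⟩ fun β hβ => ?_)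
  rcases le_total b β with hb | hb
  · exact le_csSup hSb (hTS β hβ hb)
  · exact hb.trans (le_csSup hSb hbS)

lemma coverNum_le_card {r : ℝ} {F : Set ℝ} {S : Finset ℝ}
    (h : F ⊆ ⋃ x ∈ S, Metric.closedBall x r) : coverNum r F ≤ S.card :=
  Nat.sInf_le ⟨S, rfl, h⟩

lemma exists_finset_card_eq_coverNum {r : ℝ} {F : Set ℝ} (hr : 0 < r) (hF : TotallyBounded F) :
    ∃ S : Finset ℝ, S.card = coverNum r F ∧ F ⊆ ⋃ x ∈ S, Metric.closedBall x r := by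
  obtain ⟨N, -, hN, hcov⟩ :=
    Metric.exists_finite_isCover_of_totallyBounded (ε := r.toNNReal) (by simpa using hr) hF
  refine Nat.sInf_mem (s := {n | ∃ S : Finset ℝ, S.card = n ∧ F ⊆ ⋃ x ∈ S, Metric.closedBall x r})
    ⟨hN.toFinset.card, hN.toFinset, rfl, ?_⟩
  simpa [hr.le] using hcov.subset_iUnion_closedBall

lemma card_le_coverNum {r : ℝ} {F : Set ℝ} {P : Finset ℝ} (hr : 0 < r) (hF : TotallyBounded F)
    (hPF : ↑P ⊆ F) (hP : (P : Set ℝ).Pairwise fun x y => 2 * r < dist x y) :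
    P.card ≤ coverNum r F := by
  obtain ⟨S, hS, hcov⟩ := exists_finset_card_eq_coverNum hr hF
  have hsep : Metric.IsSeparated ((2 * r.toNNReal : NNReal) : ENNReal) (P : Set ℝ) := by
    intro x hx y hy hxy
    rw [edist_dist, ← ENNReal.ofReal_coe_nnreal]
    exact (ENNReal.ofReal_lt_ofReal_iff (dist_pos.2 hxy)).2 (by simpa [hr.le] using hP hx hy hxy)
  have hcover : Metric.IsCover r.toNNReal F S :=
    .of_subset_iUnion_closedBall (by simpa [hr.le] using hcov)
  have := (hsep.encard_le_packingNumber hPF).trans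
    ((Metric.packingNumber_two_mul_le_externalCoveringNumber _ _).trans
      hcover.externalCoveringNumber_le_encard)
  rw [Set.encard_coe_eq_coe_finsetCard, Set.encard_coe_eq_coe_finsetCard, hS] at this
  exact_mod_cast this

def IsLowerAssouadExponent (F : Set ℝ) (α : ℝ) : Prop :=
  ∃ c > (0 : ℝ), ∃ ρ > (0 : ℝ), ∀ x ∈ F, ∀ r R : ℝ, 0 < r → r < R → R < ρ →
    c * (R / r) ^ α ≤ (coverNum r (Metric.closedBall x R ∩ F) : ℝ)

def IsAvgLenExponent (a : ℕ → ℝ) (β : ℝ) : Prop :=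
  ∃ kβ nβ : ℕ, ∀ k : ℕ, kβ ≤ k → ∀ n : ℕ, nβ ≤ n →
    β ≤ (n : ℝ) * Real.log 2 / Real.log (avgLen a k / avgLen a (k + n))

/-- The `2 ^ m` gaps that are removed from the interval `I_k^j` at step `k + m`. -/
noncomputable def cantorGaps (a : ℕ → ℝ) (k j m : ℕ) : ℝ :=
  ∑ i ∈ range (2 ^ m), a (2 ^ (k + m) - 1 + 2 ^ m * j + i)

def cantorInterval (a : ℕ → ℝ) (k j : ℕ) : Set ℝ :=
  Set.Icc (cantorLeft a k j) (cantorLeft a k j + cantorLen a k j)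

section AssocCantor

variable {a : ℕ → ℝ}

lemma cantorLen_eq_tsum_cantorGaps (k j : ℕ) : cantorLen a k j = ∑' m, cantorGaps a k j m := rfl

lemma cantorGaps_zero (k j : ℕ) : cantorGaps a k j 0 = a (2 ^ k - 1 + j) := by
  simp [cantorGaps]

lemma cantorGaps_succ (k j m : ℕ) :
    cantorGaps a k j (m + 1) =
      cantorGaps a (k + 1) (2 * j) m + cantorGaps a (k + 1) (2 * j + 1) m := by
  rw [cantorGaps, pow_succ, mul_two, sum_range_add, cantorGaps, cantorGaps]
  congr 1 <;> refine sum_congr rfl fun i _ => congrArg a ?_ <;>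
    rw [show k + 1 + m = k + (m + 1) by ring] <;> ring

lemma cantorGaps_succ_zero (k m : ℕ) : cantorGaps a (k + 1) 0 m = cantorGaps a k (2 ^ k) m := by
  refine sum_congr rfl fun i _ => congrArg a ?_
  rw [← pow_add, show k + 1 + m = k + m + 1 by ring, pow_succ, add_comm m k]
  have : 1 ≤ 2 ^ (k + m) := Nat.one_le_two_pow
  omega

lemma sum_cantorGaps (k m : ℕ) :
    ∑ j ∈ range (2 ^ k), cantorGaps a k j m =
      ∑ i ∈ range (2 ^ (k + m + 1) - 1), a i - ∑ i ∈ range (2 ^ (k + m) - 1), a i := by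
  have hle : 2 ^ (k + m) - 1 ≤ 2 ^ (k + m + 1) - 1 := by
    have := Nat.pow_le_pow_right (show 0 < 2 by norm_num) (Nat.le_succ (k + m)); omega
  rw [← sum_Ico_eq_sub _ hle, sum_Ico_eq_sum_range,
    show 2 ^ (k + m + 1) - 1 - (2 ^ (k + m) - 1) = 2 ^ k * 2 ^ m by
      have := Nat.one_le_two_pow (n := k + m)
      rw [pow_succ, pow_add] at *; omega,
    sum_range_mul_eq_sum_sum]
  simp only [cantorGaps, add_assoc]

lemma cantorGaps_antitone (hdec : Antitone a) (k m : ℕ) : Antitone (cantorGaps a k · m) :=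
  fun _ _ hj => sum_le_sum fun _ _ => hdec (by gcongr)

lemma cantorGaps_nonneg (hdec : Antitone a) (hsum : Summable a) (k j m : ℕ) :
    0 ≤ cantorGaps a k j m :=
  sum_nonneg fun _ _ => hdec.le_of_tendsto hsum.tendsto_atTop_zero _

lemma hasSum_sum_cantorGaps (hdec : Antitone a) (hsum : Summable a) (k : ℕ) :
    HasSum (fun m => ∑ j ∈ range (2 ^ k), cantorGaps a k j m) (∑' i, a (2 ^ k - 1 + i)) := by
  set T : ℕ → ℝ := fun n => ∑ i ∈ range n, a i
  have hT : Tendsto (fun M => T (2 ^ (k + M) - 1)) atTop (𝓝 (∑' i, a i)) := by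
    refine hsum.tendsto_sum_tsum_nat.comp (tendsto_atTop_mono (fun M => ?_) tendsto_id)
    have := Nat.lt_pow_self (show 1 < 2 by norm_num) (n := k + M)
    have := Nat.pow_le_pow_right (show 0 < 2 by norm_num) (Nat.le_add_left M k)
    simp only [id]; omega
  rw [hasSum_iff_tendsto_nat_of_nonneg
    fun m => sum_nonneg fun j _ => cantorGaps_nonneg hdec hsum k j m]
  simp only [sum_cantorGaps]
  have := hT.sub_const (T (2 ^ k - 1))
  rw [← hsum.sum_add_tsum_nat_add (2 ^ k - 1), add_sub_cancel_left] at this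
  convert this using 2 with M
  · exact sum_range_sub (fun M => T (2 ^ (k + M) - 1)) M
  · exact tsum_congr fun i => by rw [add_comm]

lemma summable_cantorGaps (hdec : Antitone a) (hsum : Summable a) (k j : ℕ) :
    Summable (cantorGaps a k j) :=
  (hasSum_sum_cantorGaps hdec hsum k).summable.of_nonneg_of_le (cantorGaps_nonneg hdec hsum k j)
    fun m => (cantorGaps_antitone hdec k m (Nat.zero_le j)).trans <|
      single_le_sum (fun j _ => cantorGaps_nonneg hdec hsum k j m)
        (mem_range.2 (Nat.two_pow_pos k))

lemma cantorLen_nonneg (hdec : Antitone a) (hsum : Summable a) (k j : ℕ) : 0 ≤ cantorLen a k j :=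
  tsum_nonneg (cantorGaps_nonneg hdec hsum k j)

lemma cantorLen_antitone (hdec : Antitone a) (hsum : Summable a) (k : ℕ) :
    Antitone (cantorLen a k) := fun _ _ hj =>
  (summable_cantorGaps hdec hsum k _).tsum_le_tsum (fun m => cantorGaps_antitone hdec k m hj)
    (summable_cantorGaps hdec hsum k _)

lemma cantorLen_succ_zero (k : ℕ) : cantorLen a (k + 1) 0 = cantorLen a k (2 ^ k) :=
  tsum_congr fun m => cantorGaps_succ_zero k m

lemma cantorLen_eq_add_cantorLen_add_cantorLen (hdec : Antitone a) (hsum : Summable a)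
    (k j : ℕ) : cantorLen a k j =
      a (2 ^ k - 1 + j) + cantorLen a (k + 1) (2 * j) + cantorLen a (k + 1) (2 * j + 1) := by
  rw [cantorLen_eq_tsum_cantorGaps, (summable_cantorGaps hdec hsum k j).tsum_eq_zero_add,
    cantorGaps_zero, add_assoc]
  simp only [cantorGaps_succ]
  rw [(summable_cantorGaps hdec hsum _ _).tsum_add (summable_cantorGaps hdec hsum _ _)]
  rfl

lemma sum_cantorLen (hdec : Antitone a) (hsum : Summable a) (k : ℕ) :
    ∑ j ∈ range (2 ^ k), cantorLen a k j = ∑' i, a (2 ^ k - 1 + i) := by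
  rw [← (hasSum_sum_cantorGaps hdec hsum k).tsum_eq,
    Summable.tsum_finsetSum fun j _ => summable_cantorGaps hdec hsum k j]
  rfl

lemma avgLen_eq (hdec : Antitone a) (hsum : Summable a) (k : ℕ) :
    avgLen a k = (∑ j ∈ range (2 ^ k), cantorLen a k j) / 2 ^ k := by
  rw [sum_cantorLen hdec hsum, avgLen]

lemma avgLen_le_cantorLen_zero (hdec : Antitone a) (hsum : Summable a) (k : ℕ) :
    avgLen a k ≤ cantorLen a k 0 := by
  rw [avgLen_eq hdec hsum, div_le_iff₀ (by positivity)]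
  calc ∑ j ∈ range (2 ^ k), cantorLen a k j ≤ ∑ _j ∈ range (2 ^ k), cantorLen a k 0 :=
        sum_le_sum fun j _ => cantorLen_antitone hdec hsum k (Nat.zero_le j)
    _ = cantorLen a k 0 * 2 ^ k := by simp [mul_comm]

lemma cantorLen_succ_le_avgLen (hdec : Antitone a) (hsum : Summable a) (k j : ℕ) :
    cantorLen a (k + 1) j ≤ avgLen a k := by
  refine (cantorLen_antitone hdec hsum _ (Nat.zero_le j)).trans ?_
  rw [cantorLen_succ_zero, avgLen_eq hdec hsum, le_div_iff₀ (by positivity)]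
  calc cantorLen a k (2 ^ k) * 2 ^ k = ∑ _j ∈ range (2 ^ k), cantorLen a k (2 ^ k) := by
        simp [mul_comm]
    _ ≤ ∑ j ∈ range (2 ^ k), cantorLen a k j :=
        sum_le_sum fun j hj => cantorLen_antitone hdec hsum k (mem_range.1 hj).le

lemma avgLen_succ_le_cantorLen (hdec : Antitone a) (hsum : Summable a) {k j : ℕ}
    (hj : j ≤ 2 ^ k) : avgLen a (k + 1) ≤ cantorLen a k j :=
  calc avgLen a (k + 1) ≤ cantorLen a (k + 1) 0 := avgLen_le_cantorLen_zero hdec hsum _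
    _ = cantorLen a k (2 ^ k) := cantorLen_succ_zero k
    _ ≤ cantorLen a k j := cantorLen_antitone hdec hsum k hj

lemma avgLen_pos (hpos : ∀ n, 0 < a n) (hsum : Summable a) (k : ℕ) : 0 < avgLen a k :=
  div_pos ((hsum.comp_injective (add_right_injective _)).tsum_pos (fun i => (hpos _).le) 0
    (hpos _)) (by positivity)

lemma avgLen_nonneg (hdec : Antitone a) (hsum : Summable a) (k : ℕ) : 0 ≤ avgLen a k :=
  div_nonneg (tsum_nonneg fun _ => hdec.le_of_tendsto hsum.tendsto_atTop_zero _) (by positivity)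

lemma avgLen_succ_le (hdec : Antitone a) (hsum : Summable a) (k : ℕ) :
    avgLen a (k + 1) ≤ avgLen a k / 2 := by
  have hk : 2 ^ k - 1 ≤ 2 ^ (k + 1) - 1 :=
    Nat.sub_le_sub_right (Nat.pow_le_pow_right (by norm_num) k.le_succ) 1
  have htail : ∑' i, a (2 ^ (k + 1) - 1 + i) ≤ ∑' i, a (2 ^ k - 1 + i) :=
    (hsum.comp_injective (add_right_injective _)).tsum_le_tsum (fun i => hdec (by omega))
      (hsum.comp_injective (add_right_injective _))
  rw [avgLen, avgLen, div_div, ← pow_succ]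
  gcongr

lemma avgLen_add_le (hdec : Antitone a) (hsum : Summable a) (k n : ℕ) :
    avgLen a (k + n) ≤ avgLen a k / 2 ^ n := by
  induction n with
  | zero => simp
  | succ n ih =>
    calc avgLen a (k + (n + 1)) ≤ avgLen a (k + n) / 2 := avgLen_succ_le hdec hsum (k + n)
      _ ≤ avgLen a k / 2 ^ n / 2 := by gcongr
      _ = avgLen a k / 2 ^ (n + 1) := by rw [div_div, pow_succ]

lemma avgLen_antitone (hdec : Antitone a) (hsum : Summable a) : Antitone (avgLen a) := by
  intro k l hkl
  obtain ⟨n, rfl⟩ := Nat.exists_eq_add_of_le hkl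
  exact (avgLen_add_le hdec hsum k n).trans
    (div_le_self (avgLen_nonneg hdec hsum k) (one_le_pow₀ (by norm_num)))

lemma tendsto_avgLen_atTop (hdec : Antitone a) (hsum : Summable a) :
    Tendsto (avgLen a) atTop (𝓝 0) :=
  squeeze_zero (avgLen_nonneg hdec hsum)
    (fun n => by simpa using avgLen_add_le hdec hsum 0 n)
    (tendsto_const_nhds.div_atTop (tendsto_pow_atTop_atTop_of_one_lt one_lt_two))

lemma two_pow_le_avgLen_div (hpos : ∀ n, 0 < a n) (hdec : Antitone a) (hsum : Summable a)
    (k n : ℕ) : 2 ^ n ≤ avgLen a k / avgLen a (k + n) := by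
  rw [le_div_iff₀ (avgLen_pos hpos hsum _), mul_comm, ← le_div_iff₀ (by positivity)]
  exact avgLen_add_le hdec hsum k n

lemma le_mul_log_two_div_log_iff (hpos : ∀ n, 0 < a n) (hdec : Antitone a) (hsum : Summable a)
    {β : ℝ} {k n : ℕ} (hn : n ≠ 0) :
    β ≤ n * Real.log 2 / Real.log (avgLen a k / avgLen a (k + n)) ↔
      (avgLen a k / avgLen a (k + n)) ^ β ≤ 2 ^ n := by
  have hq : 1 < avgLen a k / avgLen a (k + n) :=
    (one_lt_pow₀ one_lt_two hn).trans_le (two_pow_le_avgLen_div hpos hdec hsum k n)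
  rw [← Real.log_pow, Real.log_div_log, Real.le_logb_iff_rpow_le hq (by positivity)]

lemma mem_assocCantor_iff {x : ℝ} :
    x ∈ assocCantor a ↔ ∀ k, ∃ j < 2 ^ k, x ∈ cantorInterval a k j := by
  simp only [assocCantor, cantorInterval, Set.mem_iInter, Set.mem_iUnion, Finset.mem_range,
    exists_prop]

lemma cantorLeft_two_mul (k j : ℕ) : cantorLeft a (k + 1) (2 * j) = cantorLeft a k j := by
  simp [cantorLeft]

lemma cantorLeft_two_mul_add_one (k j : ℕ) :
    cantorLeft a (k + 1) (2 * j + 1) =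
      cantorLeft a k j + cantorLen a (k + 1) (2 * j) + a (2 ^ k - 1 + j) := by
  simp [cantorLeft, Nat.mul_add_div]

lemma cantorLeft_two_pow_mul (k j n : ℕ) : cantorLeft a (k + n) (2 ^ n * j) = cantorLeft a k j := by
  induction n with
  | zero => simp
  | succ n ih => rw [pow_succ', mul_assoc, ← add_assoc, cantorLeft_two_mul, ih]

lemma cantorLeft_zero (k : ℕ) : cantorLeft a k 0 = 0 := by
  simpa [cantorLeft] using cantorLeft_two_pow_mul (a := a) 0 0 k

lemma cantorLeft_add_cantorLen_two_mul_add_one (hdec : Antitone a) (hsum : Summable a)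
    (k j : ℕ) : cantorLeft a (k + 1) (2 * j + 1) + cantorLen a (k + 1) (2 * j + 1) =
      cantorLeft a k j + cantorLen a k j := by
  rw [cantorLeft_two_mul_add_one, cantorLen_eq_add_cantorLen_add_cantorLen hdec hsum k j]
  ring

lemma cantorInterval_succ_subset (hdec : Antitone a) (hsum : Summable a) (k j : ℕ) :
    cantorInterval a (k + 1) j ⊆ cantorInterval a k (j / 2) := by
  have hgap := hdec.le_of_tendsto hsum.tendsto_atTop_zero (2 ^ k - 1 + j / 2)
  have hlen := cantorLen_nonneg hdec hsum (k + 1)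
  obtain ⟨i, rfl | rfl⟩ := Nat.even_or_odd' j
  · have := cantorLen_eq_add_cantorLen_add_cantorLen hdec hsum k i
    rw [cantorInterval, cantorLeft_two_mul, Nat.mul_div_cancel_left i two_pos] at *
    exact Set.Icc_subset_Icc le_rfl (by linarith [hlen (2 * i + 1)])
  · have := cantorLeft_add_cantorLen_two_mul_add_one hdec hsum k i
    rw [cantorInterval, show (2 * i + 1) / 2 = i by omega, this, cantorLeft_two_mul_add_one] at *
    exact Set.Icc_subset_Icc (by linarith [hlen (2 * i)]) le_rfl

lemma cantorInterval_add_subset (hdec : Antitone a) (hsum : Summable a) (k n j : ℕ) :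
    cantorInterval a (k + n) j ⊆ cantorInterval a k (j / 2 ^ n) := by
  induction n generalizing j with
  | zero => simp
  | succ n ih =>
    refine (cantorInterval_succ_subset hdec hsum (k + n) j).trans ?_
    rw [pow_succ', ← Nat.div_div_eq_div_mul]
    exact ih (j / 2)

lemma cantorLeft_mem_cantorInterval (hdec : Antitone a) (hsum : Summable a) (k j : ℕ) :
    cantorLeft a k j ∈ cantorInterval a k j :=
  ⟨le_rfl, le_add_of_nonneg_right (cantorLen_nonneg hdec hsum k j)⟩

lemma cantorLeft_mem_assocCantor (hdec : Antitone a) (hsum : Summable a) {k j : ℕ}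
    (hj : j < 2 ^ k) : cantorLeft a k j ∈ assocCantor a := by
  refine mem_assocCantor_iff.2 fun m => ⟨2 ^ m * j / 2 ^ k, ?_, ?_⟩
  · exact Nat.div_lt_of_lt_mul (by rw [mul_comm (2 ^ k)]; gcongr)
  · rw [← cantorLeft_two_pow_mul k j m, add_comm k m]
    exact cantorInterval_add_subset hdec hsum m k _
      (cantorLeft_mem_cantorInterval hdec hsum _ _)

lemma zero_mem_assocCantor (hdec : Antitone a) (hsum : Summable a) : 0 ∈ assocCantor a := by
  simpa [cantorLeft_zero] using cantorLeft_mem_assocCantor hdec hsum (Nat.two_pow_pos 0)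

lemma cantorLeft_add_cantorLen_lt_succ (hpos : ∀ n, 0 < a n) (hdec : Antitone a)
    (hsum : Summable a) {k j : ℕ} (hj : j + 1 < 2 ^ k) :
    cantorLeft a k j + cantorLen a k j < cantorLeft a k (j + 1) := by
  induction k generalizing j with
  | zero => simp at hj
  | succ k ih =>
    obtain ⟨i, rfl | rfl⟩ := Nat.even_or_odd' j
    · rw [cantorLeft_two_mul_add_one, cantorLeft_two_mul]
      linarith [hpos (2 ^ k - 1 + i)]
    · rw [cantorLeft_add_cantorLen_two_mul_add_one hdec hsum,
        show 2 * i + 1 + 1 = 2 * (i + 1) by ring, cantorLeft_two_mul]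
      exact ih (by rw [pow_succ] at hj; omega)

lemma cantorLeft_add_cantorLen_lt (hpos : ∀ n, 0 < a n) (hdec : Antitone a)
    (hsum : Summable a) {k i j : ℕ} (hij : i < j) (hj : j < 2 ^ k) :
    cantorLeft a k i + cantorLen a k i < cantorLeft a k j := by
  induction j, hij using Nat.le_induction with
  | base => exact cantorLeft_add_cantorLen_lt_succ hpos hdec hsum hj
  | succ j hij ih =>
    refine (ih (by omega)).trans ?_
    linarith [cantorLeft_add_cantorLen_lt_succ hpos hdec hsum hj, cantorLen_nonneg hdec hsum k j]

lemma eq_of_mem_cantorInterval (hpos : ∀ n, 0 < a n) (hdec : Antitone a) (hsum : Summable a)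
    {k i j : ℕ} {x : ℝ} (hi : i < 2 ^ k) (hj : j < 2 ^ k) (hxi : x ∈ cantorInterval a k i)
    (hxj : x ∈ cantorInterval a k j) : i = j := by
  by_contra hne
  rcases Nat.lt_or_gt_of_ne hne with h | h
  · linarith [cantorLeft_add_cantorLen_lt hpos hdec hsum h hj, hxi.2, hxj.1]
  · linarith [cantorLeft_add_cantorLen_lt hpos hdec hsum h hi, hxi.1, hxj.2]

lemma exists_mem_cantorInterval_add (hpos : ∀ n, 0 < a n) (hdec : Antitone a)
    (hsum : Summable a) {k j n : ℕ} {y : ℝ} (hj : j < 2 ^ k) (hy : y ∈ assocCantor a)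
    (hyj : y ∈ cantorInterval a k j) :
    ∃ t < 2 ^ n, y ∈ cantorInterval a (k + n) (2 ^ n * j + t) := by
  obtain ⟨i, hi, hyi⟩ := mem_assocCantor_iff.1 hy (k + n)
  have hij : i / 2 ^ n = j := eq_of_mem_cantorInterval hpos hdec hsum
    (Nat.div_lt_of_lt_mul (by rwa [← pow_add, add_comm n]))
    hj (cantorInterval_add_subset hdec hsum k n i hyi) hyj
  refine ⟨i % 2 ^ n, Nat.mod_lt _ (by positivity), ?_⟩
  rwa [← hij, Nat.div_add_mod]

lemma two_pow_le_coverNum (hpos : ∀ n, 0 < a n) (hdec : Antitone a) (hsum : Summable a)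
    {x r R : ℝ} {k j n : ℕ} (hx : x ∈ assocCantor a) (hj : j < 2 ^ k)
    (hxj : x ∈ cantorInterval a k j) (hR : cantorLen a k j ≤ R) (hr : 0 < r)
    (hsep : n ≠ 0 → 2 * r < avgLen a (k + n + 1)) :
    2 ^ n ≤ coverNum r (Metric.closedBall x R ∩ assocCantor a) := by
  have hF : TotallyBounded (Metric.closedBall x R ∩ assocCantor a) :=
    (isCompact_closedBall x R).totallyBounded.subset Set.inter_subset_left
  rcases eq_or_ne n 0 with rfl | hn
  · simpa using card_le_coverNum (P := {x}) hr hF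
      (by simpa using ⟨(cantorLen_nonneg hdec hsum k j).trans hR, hx⟩)
      (by simp)
  set p : ℕ → ℝ := fun t => cantorLeft a (k + n) (2 ^ n * j + t)
  have hidx : ∀ t < 2 ^ n, 2 ^ n * j + t < 2 ^ (k + n) := fun t ht => by
    rw [pow_add, mul_comm (2 ^ k)]
    nlinarith
  have hlt : ∀ s t, s < t → t < 2 ^ n → p s + 2 * r < p t := fun s t hst ht =>
    calc p s + 2 * r < p s + avgLen a (k + n + 1) := by linarith [hsep hn]
      _ ≤ p s + cantorLen a (k + n) (2 ^ n * j + s) := by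
          gcongr; exact avgLen_succ_le_cantorLen hdec hsum (hidx s (hst.trans ht)).le
      _ < p t := cantorLeft_add_cantorLen_lt hpos hdec hsum (by omega) (hidx t ht)
  have hcard : ((range (2 ^ n)).image p).card = 2 ^ n := by
    rw [card_image_of_injOn, card_range]
    intro s hs t ht hst
    by_contra hne
    rcases Nat.lt_or_gt_of_ne hne with h | h
    · linarith [hlt s t h (mem_range.1 ht)]
    · linarith [hlt t s h (mem_range.1 hs)]
  rw [← hcard]
  refine card_le_coverNum hr hF ?_ ?_
  · simp only [coe_image, coe_range, Set.image_subset_iff]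
    intro t ht
    have hpt : p t ∈ cantorInterval a k j := by
      have := cantorInterval_add_subset hdec hsum k n _
        (cantorLeft_mem_cantorInterval hdec hsum (k + n) (2 ^ n * j + t))
      rwa [Nat.mul_add_div (by positivity), Nat.div_eq_of_lt ht, add_zero] at this
    exact ⟨(Real.dist_le_of_mem_Icc hpt hxj).trans (by simpa using hR),
      cantorLeft_mem_assocCantor hdec hsum (hidx t ht)⟩
  · simp only [coe_image, coe_range]
    rintro _ ⟨s, hs, rfl⟩ _ ⟨t, ht, rfl⟩ hst
    rcases lt_or_gt_of_ne (ne_of_apply_ne p hst) with h | h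
    · rw [Real.dist_eq, abs_sub_comm, abs_of_pos (by linarith [hlt s t h ht])]
      linarith [hlt s t h ht]
    · rw [Real.dist_eq, abs_of_pos (by linarith [hlt t s h hs])]
      linarith [hlt t s h hs]

lemma IsAvgLenExponent.isLowerAssouadExponent (hpos : ∀ n, 0 < a n) (hdec : Antitone a)
    (hsum : Summable a) {β : ℝ} (hβ : IsAvgLenExponent a β) (hβ0 : 0 ≤ β) :
    IsLowerAssouadExponent (assocCantor a) β := by
  obtain ⟨kβ, nβ, hβ⟩ := hβ
  refine ⟨(2 ^ β * 2 ^ (nβ + 4))⁻¹, by positivity, avgLen a kβ, avgLen_pos hpos hsum kβ, ?_⟩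
  intro x hx r R hr hrR hRρ
  have hu := tendsto_avgLen_atTop hdec hsum
  obtain ⟨m, hmR, hRm⟩ := exists_le_and_lt_of_tendsto_zero hu (hr.trans hrR) kβ
  set ℓ := kβ + m
  have hRℓ : R < avgLen a ℓ := by
    rcases eq_or_ne m 0 with hm | hm
    · simpa [ℓ, hm] using hRρ
    · exact hRm hm
  obtain ⟨j, hj, hxj⟩ := mem_assocCantor_iff.1 hx (ℓ + 2)
  have hlen : cantorLen a (ℓ + 2) j ≤ R := (cantorLen_succ_le_avgLen hdec hsum _ j).trans hmR
  obtain ⟨n, hnr, hsep⟩ := exists_le_and_lt_of_tendsto_zero hu (mul_pos two_pos hr) (ℓ + 2 + 1)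
  have hcount := two_pow_le_coverNum hpos hdec hsum hx hj hxj hlen hr (n := n)
    (fun hn => by simpa [add_right_comm] using hsep hn)
  set N := n + 4 + nβ
  have hq := (le_mul_log_two_div_log_iff hpos hdec hsum (by omega)).1
    (hβ ℓ (by omega) N (by omega))
  have hRr : R / r ≤ 2 * (avgLen a ℓ / avgLen a (ℓ + N)) := by
    have : avgLen a (ℓ + N) ≤ 2 * r :=
      (avgLen_antitone hdec hsum (by omega)).trans hnr
    have hℓN := avgLen_pos hpos hsum (ℓ + N)
    rw [div_le_iff₀ hr]
    calc R ≤ avgLen a ℓ := hRℓ.le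
      _ = avgLen a ℓ / avgLen a (ℓ + N) * avgLen a (ℓ + N) := (div_mul_cancel₀ _ hℓN.ne').symm
      _ ≤ avgLen a ℓ / avgLen a (ℓ + N) * (2 * r) := by
          gcongr; exact div_nonneg (avgLen_nonneg hdec hsum _) hℓN.le
      _ = 2 * (avgLen a ℓ / avgLen a (ℓ + N)) * r := by ring
  rw [inv_mul_le_iff₀ (by positivity)]
  calc (R / r) ^ β ≤ (2 * (avgLen a ℓ / avgLen a (ℓ + N))) ^ β :=
        Real.rpow_le_rpow (div_pos (hr.trans hrR) hr).le hRr hβ0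
    _ = 2 ^ β * (avgLen a ℓ / avgLen a (ℓ + N)) ^ β := Real.mul_rpow (by norm_num)
        (div_nonneg (avgLen_nonneg hdec hsum _) (avgLen_nonneg hdec hsum _))
    _ ≤ 2 ^ β * 2 ^ N := by gcongr
    _ = 2 ^ β * 2 ^ (nβ + 4) * 2 ^ n := by rw [mul_assoc, ← pow_add]; congr 2; omega
    _ ≤ 2 ^ β * 2 ^ (nβ + 4) * coverNum r (Metric.closedBall x R ∩ assocCantor a) := by
        gcongr; exact_mod_cast hcount

lemma coverNum_closedBall_zero_le (hpos : ∀ n, 0 < a n) (hdec : Antitone a) (hsum : Summable a)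
    (k n : ℕ) : coverNum (cantorLen a (k + n) 0 / 2)
      (Metric.closedBall 0 (cantorLen a k 0) ∩ assocCantor a) ≤ 2 ^ n := by
  set r := cantorLen a (k + n) 0 / 2
  refine (coverNum_le_card (S := (range (2 ^ n)).image (cantorLeft a (k + n) · + r)) ?_).trans
    (card_image_le.trans (card_range _).le)
  rintro y ⟨hyR, hy⟩
  have hy0 : 0 ≤ y := by
    obtain ⟨j, hj, hyj⟩ := mem_assocCantor_iff.1 hy 0
    simpa [Nat.lt_one_iff.1 hj, cantorLeft_zero] using hyj.1
  have hyI : y ∈ cantorInterval a k 0 := by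
    rw [Metric.mem_closedBall, Real.dist_eq, sub_zero, abs_of_nonneg hy0] at hyR
    simpa [cantorInterval, cantorLeft_zero] using ⟨hy0, hyR⟩
  obtain ⟨t, ht, hyt⟩ :=
    exists_mem_cantorInterval_add hpos hdec hsum (n := n) (Nat.two_pow_pos k) hy hyI
  rw [mul_zero, zero_add] at hyt
  have hlen := cantorLen_antitone hdec hsum (k + n) (Nat.zero_le t)
  simp only [Set.mem_iUnion, exists_prop]
  refine ⟨_, mem_image_of_mem _ (mem_range.2 ht), ?_⟩
  rw [Real.closedBall_eq_Icc]
  have hr : 2 * r = cantorLen a (k + n) 0 := by ring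
  constructor <;> linarith [hyt.1, hyt.2]

lemma IsLowerAssouadExponent.isAvgLenExponent (hpos : ∀ n, 0 < a n) (hdec : Antitone a)
    (hsum : Summable a) {α β : ℝ} (hα : IsLowerAssouadExponent (assocCantor a) α) (hα0 : 0 ≤ α)
    (hβα : β < α) : IsAvgLenExponent a β := by
  obtain ⟨c, hc, ρ, hρ, hcov⟩ := hα
  obtain ⟨K, hK⟩ :=
    eventually_atTop.1 ((tendsto_avgLen_atTop hdec hsum).eventually (gt_mem_nhds hρ))
  have hgrow : Tendsto (fun n : ℕ => ((2 : ℝ) ^ (α - β)) ^ n) atTop atTop :=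
    tendsto_pow_atTop_atTop_of_one_lt (Real.one_lt_rpow one_lt_two (sub_pos.2 hβα))
  obtain ⟨N, hN⟩ := eventually_atTop.1 (hgrow.eventually_ge_atTop (2 / c))
  refine ⟨K + 1, N + 1, ?_⟩
  rintro (_ | k) hk n hn
  · omega
  set q := avgLen a (k + 1) / avgLen a (k + 1 + n)
  set R := cantorLen a (k + 1) 0
  set r := cantorLen a (k + 1 + (n + 1)) 0 / 2
  have hqpos : 0 < q := div_pos (avgLen_pos hpos hsum _) (avgLen_pos hpos hsum _)
  have hq := two_pow_le_avgLen_div hpos hdec hsum (k + 1) n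
  have hRq : avgLen a (k + 1) ≤ R := avgLen_le_cantorLen_zero hdec hsum _
  have hrq : r ≤ avgLen a (k + 1 + n) / 2 := by
    have := cantorLen_succ_le_avgLen hdec hsum (k + 1 + n) 0
    simp only [r]
    gcongr
    exact this
  have hr : 0 < r := half_pos ((avgLen_pos hpos hsum _).trans_le
    (avgLen_le_cantorLen_zero hdec hsum _))
  have hmono := avgLen_antitone hdec hsum (Nat.le_add_right (k + 1) n)
  have hn1 := avgLen_pos hpos hsum (k + 1 + n)
  have hqRr : q ≤ R / r := div_le_div₀ (hr.le.trans (by linarith)) hRq hr (by linarith)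
  have hcount : c * q ^ α ≤ 2 ^ (n + 1) := by
    calc c * q ^ α ≤ c * (R / r) ^ α := by gcongr
      _ ≤ coverNum r (Metric.closedBall 0 R ∩ assocCantor a) :=
          hcov 0 (zero_mem_assocCantor hdec hsum) r R hr (by linarith)
            ((cantorLen_succ_le_avgLen hdec hsum k 0).trans_lt (hK k (by omega)))
      _ ≤ 2 ^ (n + 1) := by
          exact_mod_cast coverNum_closedBall_zero_le hpos hdec hsum (k + 1) (n + 1)
  have hsplit : q ^ β * ((2 : ℝ) ^ (α - β)) ^ n ≤ q ^ α := by
    rw [Real.rpow_pow_comm zero_le_two, ← sub_add_cancel α β, Real.rpow_add hqpos, mul_comm,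
      add_sub_cancel_right]
    gcongr
  refine (le_mul_log_two_div_log_iff hpos hdec hsum (by omega)).2 (show q ^ β ≤ 2 ^ n from ?_)
  have hG : 2 ≤ c * ((2 : ℝ) ^ (α - β)) ^ n := by
    have := hN n (by omega)
    rwa [div_le_iff₀ hc, mul_comm] at this
  nlinarith [Real.rpow_nonneg hqpos.le β, pow_succ (2 : ℝ) n]

lemma isAvgLenExponent_zero (hpos : ∀ n, 0 < a n) (hdec : Antitone a) (hsum : Summable a) :
    IsAvgLenExponent a 0 :=
  ⟨0, 1, fun _ _ _ hn => (le_mul_log_two_div_log_iff hpos hdec hsum (by omega)).2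
    (by simpa using one_le_pow₀ one_le_two)⟩

lemma IsAvgLenExponent.le_one (hpos : ∀ n, 0 < a n) (hdec : Antitone a) (hsum : Summable a)
    {β : ℝ} (hβ : IsAvgLenExponent a β) : β ≤ 1 := by
  obtain ⟨kβ, nβ, hβ⟩ := hβ
  have hq := two_pow_le_avgLen_div hpos hdec hsum kβ (nβ + 1)
  have h := (le_mul_log_two_div_log_iff hpos hdec hsum (Nat.succ_ne_zero nβ)).1
    (hβ kβ le_rfl (nβ + 1) (Nat.le_succ nβ))
  rw [← Real.rpow_le_rpow_left_iff ((one_lt_pow₀ one_lt_two (Nat.succ_ne_zero nβ)).trans_le hq),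
    Real.rpow_one]
  exact h.trans hq

end AssocCantor

/-- formula for the Lower Assouad dimension of the Cantor set
`C_a` associated to a positive, decreasing, summable sequence `a`. -/
theorem dimL_assocCantor_formula
    (a : ℕ → ℝ) (hpos : ∀ n, 0 < a n) (hdec : Antitone a) (hsum : Summable a) :
    dimL (assocCantor a) =
      sSup {β : ℝ | ∃ kβ nβ : ℕ, ∀ k : ℕ, kβ ≤ k → ∀ n : ℕ, nβ ≤ n →
        β ≤ (n : ℝ) * Real.log 2 / Real.log (avgLen a k / avgLen a (k + n))} :=
  csSup_eq_csSup_of_forall_lt (S := {α | IsLowerAssouadExponent (assocCantor a) α})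
    (T := {β | IsAvgLenExponent a β}) (b := 0)
    ⟨1, fun _ hβ => hβ.le_one hpos hdec hsum⟩ (isAvgLenExponent_zero hpos hdec hsum)
    (fun _ hβ hβ0 => hβ.isLowerAssouadExponent hpos hdec hsum hβ0)
    (fun _ hα _ hβ0 hβα => hα.isAvgLenExponent hpos hdec hsum (hβ0.trans hβα).le hβα)
end
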